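/- arXiv:1705.05154 — 3 statements merged into one kernel-verified Lean document; each statement's English description precedes it below -/
import Mathlib

section
/- Let π be a bipartite distribution, P_{RU} = (1/2)I + (1/(2n))∑_{x∈V} T_x the lazy random-update Gibbs kernel, and P_{AS} = P_{AS1}P_{AS2} the alternating-scan kernel. Then P_{AS1}(P_{RU} − S_π)P_{AS2} = P_{AS} − S_π. -/
open Finset

open Finset

open Classical in
/-- The single-variable Gibbs update matrix at `x`: resample coordinate `x`
conditioned on the others. -/
noncomputable def gibbsT {V S : Type*} [Fintype V] [Fintype S] [DecidableEq V]
    (π : (V → S) → ℝ) (x : V) : Matrix (V → S) (V → S) ℝ :=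
  fun σ τ =>
    if ∃ s : S, τ = Function.update σ x s
    then π τ / ∑ t : S, π (Function.update σ x t)
    else 0

/-- The inner product of `L²(π)`. -/
def piInner {Ω : Type*} [Fintype Ω] (π : Ω → ℝ) (f g : Ω → ℝ) : ℝ :=
  ∑ σ, f σ * g σ * π σ

/-- The norm of `L²(π)`. -/
noncomputable def piNorm {Ω : Type*} [Fintype Ω] (π : Ω → ℝ) (f : Ω → ℝ) : ℝ :=
  Real.sqrt (piInner π f f)

/-- The operator norm on `L²(π)`. -/
noncomputable def opNorm {Ω : Type*} [Fintype Ω] (π : Ω → ℝ) (T : Matrix Ω Ω ℝ) : ℝ :=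
  sSup {r | ∃ f : Ω → ℝ, f ≠ 0 ∧ r = piNorm π (T.mulVec f) / piNorm π f}

/-- The rank-one projection matrix `S_π(σ,τ) = π(τ)`. -/
def Spi {Ω : Type*} [Fintype Ω] (π : Ω → ℝ) : Matrix Ω Ω ℝ := fun _ τ => π τ

/-- The π-adjoint of a matrix. -/
noncomputable def adjointM {Ω : Type*} [Fintype Ω] (π : Ω → ℝ) (P : Matrix Ω Ω ℝ) :
    Matrix Ω Ω ℝ := fun σ τ => π τ * P τ σ / π σ

section Bipartite

variable {n₁ n₂ : ℕ} {S : Type*} [Fintype S] [DecidableEq S]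

/-- Bipartiteness of π w.r.t. the partition V₁ = Fin n₁, V₂ = Fin n₂ of
V = Fin n₁ ⊕ Fin n₂: the conditional distribution for resampling any variable of one
class depends only on the restriction of the configuration to the other class. -/
def IsBipartite (π : (Fin n₁ ⊕ Fin n₂ → S) → ℝ) : Prop :=
  (∀ (i : Fin n₁) (σ σ' : Fin n₁ ⊕ Fin n₂ → S),
    (∀ j : Fin n₂, σ (Sum.inr j) = σ' (Sum.inr j)) → ∀ s : S,
      π (Function.update σ (Sum.inl i) s) /
          ∑ t : S, π (Function.update σ (Sum.inl i) t) =
      π (Function.update σ' (Sum.inl i) s) /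
          ∑ t : S, π (Function.update σ' (Sum.inl i) t)) ∧
  (∀ (j : Fin n₂) (σ σ' : Fin n₁ ⊕ Fin n₂ → S),
    (∀ i : Fin n₁, σ (Sum.inl i) = σ' (Sum.inl i)) → ∀ s : S,
      π (Function.update σ (Sum.inr j) s) /
          ∑ t : S, π (Function.update σ (Sum.inr j) t) =
      π (Function.update σ' (Sum.inr j) s) /
          ∑ t : S, π (Function.update σ' (Sum.inr j) t))

/-- The sweep of all variables in the first class, in order. -/
noncomputable def PAS1 (π : (Fin n₁ ⊕ Fin n₂ → S) → ℝ) :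
    Matrix (Fin n₁ ⊕ Fin n₂ → S) (Fin n₁ ⊕ Fin n₂ → S) ℝ :=
  (List.ofFn fun i : Fin n₁ => gibbsT π (Sum.inl i)).prod

/-- The sweep of all variables in the second class, in order. -/
noncomputable def PAS2 (π : (Fin n₁ ⊕ Fin n₂ → S) → ℝ) :
    Matrix (Fin n₁ ⊕ Fin n₂ → S) (Fin n₁ ⊕ Fin n₂ → S) ℝ :=
  (List.ofFn fun j : Fin n₂ => gibbsT π (Sum.inr j)).prod

/-- The alternating-scan kernel: sweep the first class, then the second. -/
noncomputable def PAS (π : (Fin n₁ ⊕ Fin n₂ → S) → ℝ) :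
    Matrix (Fin n₁ ⊕ Fin n₂ → S) (Fin n₁ ⊕ Fin n₂ → S) ℝ :=
  PAS1 π * PAS2 π

/-- The lazy random-update Gibbs kernel. -/
noncomputable def PRU (π : (Fin n₁ ⊕ Fin n₂ → S) → ℝ) :
    Matrix (Fin n₁ ⊕ Fin n₂ → S) (Fin n₁ ⊕ Fin n₂ → S) ℝ :=
  (1 / 2 : ℝ) • 1 + (1 / (2 * (n₁ + n₂)) : ℝ) • ∑ x : Fin n₁ ⊕ Fin n₂, gibbsT π x

end Bipartite

namespace GibbsAux

section General
variable {V S : Type*} [Fintype V] [Fintype S] [DecidableEq V] [DecidableEq S]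
variable (π : (V → S) → ℝ)

/-- Collapse a sum over all configurations to a sum over updates at `x`. -/
lemma sum_update_eq {x : V} {σ : V → S} (f : (V → S) → ℝ)
    (h : ∀ ρ, (¬ ∃ s, ρ = Function.update σ x s) → f ρ = 0) :
    ∑ ρ, f ρ = ∑ s, f (Function.update σ x s) := by
  classical
  have hinj : ∀ a ∈ Finset.univ, ∀ b ∈ Finset.univ,
      Function.update σ x a = Function.update σ x b → a = b := by
    intro a _ b _ hab
    have := congrFun hab x
    simpa using this
  have h1 : ∑ ρ ∈ Finset.univ.image (fun s => Function.update σ x s), f ρ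
      = ∑ s, f (Function.update σ x s) := Finset.sum_image hinj
  rw [← h1]
  apply (Finset.sum_subset (Finset.subset_univ _) ?_).symm
  intro ρ _ hρ
  apply h
  rintro ⟨s, rfl⟩
  exact hρ (Finset.mem_image.2 ⟨s, Finset.mem_univ _, rfl⟩)

lemma gibbsT_update (x : V) (σ : V → S) (s : S) :
    gibbsT π x σ (Function.update σ x s)
      = π (Function.update σ x s) / ∑ t : S, π (Function.update σ x t) := by
  unfold gibbsT
  rw [if_pos ⟨s, rfl⟩]

lemma gibbsT_zero {x : V} {σ τ : V → S} (h : ¬ ∃ s, τ = Function.update σ x s) :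
    gibbsT π x σ τ = 0 := by
  unfold gibbsT
  rw [if_neg h]

lemma Z_pos [Nonempty S] (hpos : ∀ σ, 0 < π σ) (x : V) (σ : V → S) :
    0 < ∑ t : S, π (Function.update σ x t) :=
  Finset.sum_pos (fun t _ => hpos _) Finset.univ_nonempty

lemma gibbsT_rowsum [Nonempty S] (hpos : ∀ σ, 0 < π σ) (x : V) (σ : V → S) :
    ∑ τ, gibbsT π x σ τ = 1 := by
  rw [sum_update_eq (x := x) (σ := σ) _ (fun ρ hρ => gibbsT_zero π hρ)]
  simp_rw [gibbsT_update]
  rw [← Finset.sum_div, div_self (Z_pos π hpos x σ).ne']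

lemma gibbsT_stationary [Nonempty S] (hpos : ∀ σ, 0 < π σ) (x : V) (τ : V → S) :
    ∑ σ, π σ * gibbsT π x σ τ = π τ := by
  rw [sum_update_eq (x := x) (σ := τ) _ ?hz]
  case hz =>
    intro ρ hρ
    suffices h : ¬ ∃ s, τ = Function.update ρ x s by
      rw [gibbsT_zero π h, mul_zero]
    rintro ⟨s, hs⟩
    refine hρ ⟨ρ x, ?_⟩
    funext z
    by_cases hz : z = x
    · subst hz; simp
    · simp only [Function.update_of_ne hz, hs]
  have key : ∀ r, gibbsT π x (Function.update τ x r) τ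
      = π τ / ∑ t : S, π (Function.update τ x t) := by
    intro r
    have hτ : τ = Function.update (Function.update τ x r) x (τ x) := by
      funext z
      by_cases hz : z = x
      · subst hz; simp
      · simp [Function.update_of_ne hz]
    unfold gibbsT
    rw [if_pos ⟨τ x, hτ⟩]
    congr 1
    exact Finset.sum_congr rfl fun t _ => by rw [Function.update_idem]
  simp_rw [key]
  rw [← Finset.sum_mul, mul_comm, div_mul_cancel₀ _ (Z_pos π hpos x τ).ne']

lemma gibbsT_idem [Nonempty S] (hpos : ∀ σ, 0 < π σ) (x : V) :
    gibbsT π x * gibbsT π x = gibbsT π x := by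
  ext σ τ
  rw [Matrix.mul_apply]
  rw [sum_update_eq (x := x) (σ := σ) _
    (fun ρ hρ => by rw [gibbsT_zero π hρ, zero_mul])]
  have h2 : ∀ s : S, gibbsT π x (Function.update σ x s) τ = gibbsT π x σ τ := by
    intro s
    have hcond : (∃ t, τ = Function.update (Function.update σ x s) x t)
        ↔ (∃ t, τ = Function.update σ x t) := by
      simp only [Function.update_idem]
    unfold gibbsT
    by_cases h : ∃ t, τ = Function.update σ x t
    · rw [if_pos (hcond.2 h), if_pos h]
      congr 1
      exact Finset.sum_congr rfl fun t _ => by rw [Function.update_idem]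
    · rw [if_neg (fun hh => h (hcond.1 hh)), if_neg h]
  simp_rw [h2, gibbsT_update]
  rw [← Finset.sum_mul, ← Finset.sum_div, div_self (Z_pos π hpos x σ).ne', one_mul]

lemma gibbsT_comm (x y : V) (hxy : x ≠ y)
    (hx : ∀ (σ : V → S) (t s : S),
      π (Function.update (Function.update σ y t) x s)
          / ∑ u : S, π (Function.update (Function.update σ y t) x u)
        = π (Function.update σ x s) / ∑ u : S, π (Function.update σ x u))
    (hy : ∀ (σ : V → S) (s t : S),
      π (Function.update (Function.update σ x s) y t)
          / ∑ u : S, π (Function.update (Function.update σ x s) y u)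
        = π (Function.update σ y t) / ∑ u : S, π (Function.update σ y u)) :
    gibbsT π x * gibbsT π y = gibbsT π y * gibbsT π x := by
  ext σ τ
  rw [Matrix.mul_apply, Matrix.mul_apply]
  rw [sum_update_eq (x := x) (σ := σ) _
    (fun ρ hρ => by rw [gibbsT_zero π hρ, zero_mul])]
  rw [sum_update_eq (x := y) (σ := σ) _
    (fun ρ hρ => by rw [gibbsT_zero π hρ, zero_mul])]
  have hL : ∀ s : S, s ≠ τ x →
      gibbsT π x σ (Function.update σ x s) * gibbsT π y (Function.update σ x s) τ = 0 := by
    intro s hs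
    rw [gibbsT_zero (x := y) π ?_, mul_zero]
    rintro ⟨t, ht⟩
    apply hs
    have := congrFun ht x
    simpa [Function.update_of_ne hxy] using this.symm
  have hR : ∀ t : S, t ≠ τ y →
      gibbsT π y σ (Function.update σ y t) * gibbsT π x (Function.update σ y t) τ = 0 := by
    intro t ht
    rw [gibbsT_zero (x := x) π ?_, mul_zero]
    rintro ⟨s, hs⟩
    apply ht
    have := congrFun hs y
    simpa [Function.update_of_ne hxy.symm] using this.symm
  rw [Fintype.sum_eq_single (τ x) hL, Fintype.sum_eq_single (τ y) hR,
    gibbsT_update π x σ (τ x), gibbsT_update π y σ (τ y)]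
  by_cases hc : τ = Function.update (Function.update σ x (τ x)) y (τ y)
  · have hc' : τ = Function.update (Function.update σ y (τ y)) x (τ x) := by
      rw [Function.update_comm hxy.symm]; exact hc
    have g1 : gibbsT π y (Function.update σ x (τ x)) τ
        = π τ / ∑ u : S, π (Function.update (Function.update σ x (τ x)) y u) := by
      unfold gibbsT; rw [if_pos ⟨τ y, hc⟩]
    have g2 : gibbsT π x (Function.update σ y (τ y)) τ
        = π τ / ∑ u : S, π (Function.update (Function.update σ y (τ y)) x u) := by
      unfold gibbsT; rw [if_pos ⟨τ x, hc'⟩]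
    rw [g1, g2]
    have e1 := hy σ (τ x) (τ y)
    rw [← hc] at e1
    have e2 := hx σ (τ y) (τ x)
    rw [← hc'] at e2
    rw [e1, e2]
    ring
  · have hc' : ¬ τ = Function.update (Function.update σ y (τ y)) x (τ x) := by
      rw [Function.update_comm hxy.symm]; exact hc
    have g1 : gibbsT π y (Function.update σ x (τ x)) τ = 0 := by
      refine gibbsT_zero π ?_
      rintro ⟨t, ht⟩
      have hty : t = τ y := by have := congrFun ht y; simpa using this.symm
      exact hc (by rwa [hty] at ht)
    have g2 : gibbsT π x (Function.update σ y (τ y)) τ = 0 := by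
      refine gibbsT_zero π ?_
      rintro ⟨s, hs⟩
      have hsx : s = τ x := by have := congrFun hs x; simpa using this.symm
      exact hc' (by rwa [hsx] at hs)
    rw [g1, g2, mul_zero, mul_zero]

end General

section Lists

variable {Ω : Type*} [Fintype Ω] [DecidableEq Ω]

lemma rowsum_mul {A B : Matrix Ω Ω ℝ} (hA : ∀ σ, ∑ τ, A σ τ = 1)
    (hB : ∀ σ, ∑ τ, B σ τ = 1) : ∀ σ, ∑ τ, (A * B) σ τ = 1 := by
  intro σ
  simp_rw [Matrix.mul_apply]
  rw [Finset.sum_comm]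
  simp_rw [← Finset.mul_sum, hB]
  simpa using hA σ

lemma rowsum_listprod (l : List (Matrix Ω Ω ℝ))
    (h : ∀ A ∈ l, ∀ σ, ∑ τ, A σ τ = 1) : ∀ σ, ∑ τ, l.prod σ τ = 1 := by
  induction l with
  | nil => intro σ; simp [Matrix.one_apply]
  | cons A t ih =>
    rw [List.prod_cons]
    exact rowsum_mul (h A (List.mem_cons_self))
      (ih fun B hB => h B (List.mem_cons_of_mem _ hB))

variable (π : Ω → ℝ)

lemma stat_mul {A B : Matrix Ω Ω ℝ} (hA : ∀ τ, ∑ σ, π σ * A σ τ = π τ)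
    (hB : ∀ τ, ∑ σ, π σ * B σ τ = π τ) : ∀ τ, ∑ σ, π σ * (A * B) σ τ = π τ := by
  intro τ
  simp_rw [Matrix.mul_apply, Finset.mul_sum]
  rw [Finset.sum_comm]
  simp_rw [← mul_assoc]
  calc ∑ ρ, ∑ σ, π σ * A σ ρ * B ρ τ
      = ∑ ρ, (∑ σ, π σ * A σ ρ) * B ρ τ := by
        simp_rw [Finset.sum_mul]
    _ = π τ := by simp_rw [hA]; exact hB τ

lemma stat_listprod (l : List (Matrix Ω Ω ℝ))
    (h : ∀ A ∈ l, ∀ τ, ∑ σ, π σ * A σ τ = π τ) :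
    ∀ τ, ∑ σ, π σ * l.prod σ τ = π τ := by
  induction l with
  | nil => intro τ; simp [Matrix.one_apply]
  | cons A t ih =>
    rw [List.prod_cons]
    exact stat_mul π (h A (List.mem_cons_self))
      (ih fun B hB => h B (List.mem_cons_of_mem _ hB))

end Lists

lemma prod_mul_self {M : Type*} [Monoid M] {a : M} :
    ∀ {l : List M}, a ∈ l → a * a = a → (∀ b ∈ l, Commute a b) → l.prod * a = l.prod := by
  intro l
  induction l with
  | nil => intro h; simp at h
  | cons b t ih =>
    intro ha hi hc
    rw [List.prod_cons]
    rcases List.mem_cons.1 ha with h | h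
    · subst h
      have hct : Commute a t.prod :=
        Commute.list_prod_right _ _ fun c hc' => hc c (List.mem_cons_of_mem _ hc')
      rw [mul_assoc, ← hct.eq, ← mul_assoc, hi]
    · rw [mul_assoc, ih h hi fun c hc' => hc c (List.mem_cons_of_mem _ hc')]

lemma self_mul_prod {M : Type*} [Monoid M] {a : M} {l : List M} (ha : a ∈ l)
    (hi : a * a = a) (hc : ∀ b ∈ l, Commute a b) : a * l.prod = l.prod := by
  have hct : Commute a l.prod := Commute.list_prod_right _ _ hc
  rw [hct.eq, prod_mul_self ha hi hc]

end GibbsAux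

/-- for a bipartite distribution,
`P_AS1 (P_RU - S_π) P_AS2 = P_AS - S_π`. -/
theorem PAS1_PRU_PAS2 {n₁ n₂ : ℕ} {S : Type*} [Fintype S] [DecidableEq S]
    (hn₁ : 0 < n₁) (hn₂ : 0 < n₂)
    (π : (Fin n₁ ⊕ Fin n₂ → S) → ℝ)
    (hπpos : ∀ σ, 0 < π σ) (hπsum : ∑ σ, π σ = 1) (hbip : IsBipartite π) :
    PAS1 π * (PRU π - Spi π) * PAS2 π = PAS π - Spi π := by
  classical
  have hS : Nonempty S := by
    by_contra h
    rw [not_nonempty_iff] at h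
    have : IsEmpty (Fin n₁ ⊕ Fin n₂ → S) := ⟨fun f => h.false (f (Sum.inl ⟨0, hn₁⟩))⟩
    rw [Finset.univ_eq_empty, Finset.sum_empty] at hπsum
    exact zero_ne_one hπsum
  -- commutation within classes
  have hcomm1 : ∀ i i' : Fin n₁,
      Commute (gibbsT π (Sum.inl i)) (gibbsT π (Sum.inl i')) := by
    intro i i'
    by_cases h : i = i'
    · subst h; exact Commute.refl _
    · have hxy : (Sum.inl i : Fin n₁ ⊕ Fin n₂) ≠ Sum.inl i' := by simp [h]
      exact GibbsAux.gibbsT_comm π _ _ hxy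
        (fun σ t s => hbip.1 i (Function.update σ (Sum.inl i') t) σ
          (fun j => Function.update_of_ne (by simp) _ _) s)
        (fun σ s t => hbip.1 i' (Function.update σ (Sum.inl i) s) σ
          (fun j => Function.update_of_ne (by simp) _ _) t)
  have hcomm2 : ∀ j j' : Fin n₂,
      Commute (gibbsT π (Sum.inr j)) (gibbsT π (Sum.inr j')) := by
    intro j j'
    by_cases h : j = j'
    · subst h; exact Commute.refl _
    · have hxy : (Sum.inr j : Fin n₁ ⊕ Fin n₂) ≠ Sum.inr j' := by simp [h]
      exact GibbsAux.gibbsT_comm π _ _ hxy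
        (fun σ t s => hbip.2 j (Function.update σ (Sum.inr j') t) σ
          (fun i => Function.update_of_ne (by simp) _ _) s)
        (fun σ s t => hbip.2 j' (Function.update σ (Sum.inr j) s) σ
          (fun i => Function.update_of_ne (by simp) _ _) t)
  have hidem : ∀ x, gibbsT π x * gibbsT π x = gibbsT π x :=
    fun x => GibbsAux.gibbsT_idem π hπpos x
  have habs1 : ∀ i : Fin n₁, PAS1 π * gibbsT π (Sum.inl i) = PAS1 π := by
    intro i
    refine GibbsAux.prod_mul_self ?_ (hidem _) ?_
    · rw [List.mem_ofFn]; exact ⟨i, rfl⟩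
    · intro b hb
      rw [List.mem_ofFn] at hb
      obtain ⟨i', rfl⟩ := hb
      exact hcomm1 i i'
  have habs2 : ∀ j : Fin n₂, gibbsT π (Sum.inr j) * PAS2 π = PAS2 π := by
    intro j
    refine GibbsAux.self_mul_prod ?_ (hidem _) ?_
    · rw [List.mem_ofFn]; exact ⟨j, rfl⟩
    · intro b hb
      rw [List.mem_ofFn] at hb
      obtain ⟨j', rfl⟩ := hb
      exact hcomm2 j j'
  have hrs1 : ∀ σ, ∑ τ, PAS1 π σ τ = 1 := by
    apply GibbsAux.rowsum_listprod
    intro A hA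
    rw [List.mem_ofFn] at hA
    obtain ⟨i, rfl⟩ := hA
    exact GibbsAux.gibbsT_rowsum π hπpos _
  have hst2 : ∀ τ, ∑ σ, π σ * PAS2 π σ τ = π τ := by
    apply GibbsAux.stat_listprod
    intro A hA
    rw [List.mem_ofFn] at hA
    obtain ⟨j, rfl⟩ := hA
    exact GibbsAux.gibbsT_stationary π hπpos _
  have hSpi1 : PAS1 π * Spi π = Spi π := by
    ext σ τ
    rw [Matrix.mul_apply]
    simp only [Spi]
    rw [← Finset.sum_mul, hrs1 σ, one_mul]
  have hSpi2 : Spi π * PAS2 π = Spi π := by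
    ext σ τ
    rw [Matrix.mul_apply]
    simp only [Spi]
    exact hst2 τ
  have hsand : ∀ x : Fin n₁ ⊕ Fin n₂, PAS1 π * gibbsT π x * PAS2 π = PAS π := by
    intro x
    cases x with
    | inl i => rw [habs1 i]; rfl
    | inr j => rw [mul_assoc, habs2 j]; rfl
  have hmain : PAS1 π * PRU π * PAS2 π = PAS π := by
    unfold PRU
    rw [Matrix.mul_add, Matrix.add_mul, Matrix.mul_smul, Matrix.smul_mul, Matrix.mul_one,
      Matrix.mul_smul, Matrix.smul_mul, Matrix.mul_sum, Matrix.sum_mul]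
    have hsum : (∑ x : Fin n₁ ⊕ Fin n₂, PAS1 π * gibbsT π x * PAS2 π)
        = ((n₁ + n₂ : ℕ) : ℝ) • PAS π := by
      rw [Finset.sum_congr rfl (fun x _ => hsand x), Finset.sum_const, Finset.card_univ,
        Fintype.card_sum, Fintype.card_fin, Fintype.card_fin, Nat.cast_smul_eq_nsmul]
    rw [hsum, smul_smul]
    have hne : ((n₁ : ℝ) + (n₂ : ℝ)) ≠ 0 := by
      have : (0 : ℝ) < (n₁ : ℝ) + (n₂ : ℝ) := by
        have h1 : (0 : ℝ) < (n₁ : ℝ) := by exact_mod_cast hn₁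
        have h2 : (0 : ℝ) ≤ (n₂ : ℝ) := by positivity
        linarith
      exact this.ne'
    have hc : (1 / (2 * ((n₁ : ℝ) + (n₂ : ℝ)))) * ((n₁ + n₂ : ℕ) : ℝ) = 1 / 2 := by
      push_cast
      field_simp
    rw [hc]
    have : PAS1 π * PAS2 π = PAS π := rfl
    rw [this, ← add_smul]
    norm_num
  rw [Matrix.mul_sub, Matrix.sub_mul, hSpi1, hSpi2, hmain]
end

section
/- Under the bipartite setup, with R(P_{AS}) = P_{AS}P_{AS}* the multiplicative reversiblization of the alternating-scan kernel, the operator norm bound ‖R(P_{AS}) − S_π‖_π ≤ ‖P_{RU} − S_π‖_π² holds. -/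
open Finset

open Finset

set_option linter.unusedSectionVars false
set_option linter.unusedVariables false
set_option linter.unnecessarySimpa false

section OpNormLemmas
variable {Ω : Type*} [Fintype Ω] {π : Ω → ℝ}

lemma piInner_self_nonneg (hπ : ∀ σ, 0 < π σ) (f : Ω → ℝ) : 0 ≤ piInner π f f :=
  Finset.sum_nonneg fun σ _ => mul_nonneg (mul_self_nonneg _) (hπ σ).le

lemma piNorm_nonneg (f : Ω → ℝ) : 0 ≤ piNorm π f := Real.sqrt_nonneg _

lemma piNorm_zero : piNorm π (0 : Ω → ℝ) = 0 := by simp [piNorm, piInner]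

lemma piNorm_pos (hπ : ∀ σ, 0 < π σ) {f : Ω → ℝ} (hf : f ≠ 0) : 0 < piNorm π f := by
  obtain ⟨σ₀, h0⟩ := Function.ne_iff.mp hf
  apply Real.sqrt_pos.mpr
  have h1 : 0 < f σ₀ * f σ₀ * π σ₀ :=
    mul_pos (mul_self_pos.mpr (by simpa using h0)) (hπ σ₀)
  calc (0:ℝ) < f σ₀ * f σ₀ * π σ₀ := h1
  _ ≤ piInner π f f := Finset.single_le_sum (f := fun σ => f σ * f σ * π σ)
      (fun σ _ => mul_nonneg (mul_self_nonneg _) (hπ σ).le) (Finset.mem_univ σ₀)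

lemma piNorm_mulVec_le_sqrt (hπ : ∀ σ, 0 < π σ) (T : Matrix Ω Ω ℝ) (f : Ω → ℝ) :
    piNorm π (T.mulVec f) ≤
      Real.sqrt (∑ σ, (∑ τ, (T σ τ)^2 / π τ) * π σ) * piNorm π f := by
  have hA : (0:ℝ) ≤ ∑ σ, (∑ τ, (T σ τ)^2 / π τ) * π σ := by
    apply Finset.sum_nonneg; intro σ _
    apply mul_nonneg _ (hπ σ).le
    exact Finset.sum_nonneg fun τ _ => div_nonneg (sq_nonneg _) (hπ τ).le
  rw [piNorm, piNorm, ← Real.sqrt_mul hA]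
  apply Real.sqrt_le_sqrt
  have key : ∀ σ, (T.mulVec f σ) * (T.mulVec f σ) ≤ (∑ τ, (T σ τ)^2 / π τ) * piInner π f f := by
    intro σ
    have h1 : T.mulVec f σ = ∑ τ, (T σ τ / Real.sqrt (π τ)) * (f τ * Real.sqrt (π τ)) := by
      rw [Matrix.mulVec, dotProduct]
      refine Finset.sum_congr rfl fun τ _ => ?_
      have hs : Real.sqrt (π τ) ≠ 0 := Real.sqrt_ne_zero'.mpr (hπ τ)
      field_simp
    rw [h1, ← sq]
    calc (∑ τ, (T σ τ / Real.sqrt (π τ)) * (f τ * Real.sqrt (π τ)))^2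
        ≤ (∑ τ, (T σ τ / Real.sqrt (π τ))^2) * ∑ τ, (f τ * Real.sqrt (π τ))^2 :=
          Finset.sum_mul_sq_le_sq_mul_sq _ _ _
    _ = (∑ τ, (T σ τ)^2 / π τ) * piInner π f f := by
        congr 1
        · refine Finset.sum_congr rfl fun τ _ => ?_
          rw [div_pow, Real.sq_sqrt (hπ τ).le]
        · refine Finset.sum_congr rfl fun τ _ => ?_
          rw [mul_pow, Real.sq_sqrt (hπ τ).le, sq]
  calc piInner π (T.mulVec f) (T.mulVec f)
      = ∑ σ, (T.mulVec f σ * T.mulVec f σ) * π σ := rfl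
  _ ≤ ∑ σ, ((∑ τ, (T σ τ)^2 / π τ) * piInner π f f) * π σ := by
      refine Finset.sum_le_sum fun σ _ => ?_
      exact mul_le_mul_of_nonneg_right (key σ) (hπ σ).le
  _ = (∑ σ, (∑ τ, (T σ τ)^2 / π τ) * π σ) * piInner π f f := by
      rw [Finset.sum_mul]; refine Finset.sum_congr rfl fun σ _ => by ring

lemma opNorm_bddAbove (hπ : ∀ σ, 0 < π σ) (T : Matrix Ω Ω ℝ) :
    BddAbove {r | ∃ f : Ω → ℝ, f ≠ 0 ∧ r = piNorm π (T.mulVec f) / piNorm π f} := by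
  refine ⟨Real.sqrt (∑ σ, (∑ τ, (T σ τ)^2 / π τ) * π σ), ?_⟩
  rintro r ⟨f, hf, rfl⟩
  rw [div_le_iff₀ (piNorm_pos hπ hf)]
  exact piNorm_mulVec_le_sqrt hπ T f

lemma const_one_ne_zero [Nonempty Ω] : (fun _ : Ω => (1:ℝ)) ≠ 0 := by
  intro h
  have := congrFun h (Classical.arbitrary Ω)
  simpa using this

lemma opNorm_nonneg (hπ : ∀ σ, 0 < π σ) [Nonempty Ω] (T : Matrix Ω Ω ℝ) :
    0 ≤ opNorm π T := by
  have hmem : piNorm π (T.mulVec fun _ => 1) / piNorm π (fun _ => 1) ∈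
      {r | ∃ f : Ω → ℝ, f ≠ 0 ∧ r = piNorm π (T.mulVec f) / piNorm π f} :=
    ⟨_, const_one_ne_zero, rfl⟩
  exact le_trans (div_nonneg (piNorm_nonneg _) (piNorm_nonneg _))
    (le_csSup (opNorm_bddAbove hπ T) hmem)

lemma piNorm_mulVec_le (hπ : ∀ σ, 0 < π σ) (T : Matrix Ω Ω ℝ) (f : Ω → ℝ) :
    piNorm π (T.mulVec f) ≤ opNorm π T * piNorm π f := by
  by_cases hf : f = 0
  · subst hf
    rw [Matrix.mulVec_zero]
    simp [piNorm_zero]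
  · have hmem : piNorm π (T.mulVec f) / piNorm π f ∈
        {r | ∃ g : Ω → ℝ, g ≠ 0 ∧ r = piNorm π (T.mulVec g) / piNorm π g} := ⟨f, hf, rfl⟩
    have h2 := le_csSup (opNorm_bddAbove hπ T) hmem
    rw [div_le_iff₀ (piNorm_pos hπ hf)] at h2
    exact h2

lemma opNorm_le (hπ : ∀ σ, 0 < π σ) [Nonempty Ω] {T : Matrix Ω Ω ℝ} {C : ℝ}
    (h : ∀ f, piNorm π (T.mulVec f) ≤ C * piNorm π f) : opNorm π T ≤ C := by
  have hne : {r | ∃ f : Ω → ℝ, f ≠ 0 ∧ r = piNorm π (T.mulVec f) / piNorm π f}.Nonempty :=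
    ⟨_, ⟨fun _ => 1, const_one_ne_zero, rfl⟩⟩
  apply csSup_le hne
  rintro r ⟨f, hf, rfl⟩
  rw [div_le_iff₀ (piNorm_pos hπ hf)]
  exact h f

lemma opNorm_mul_le (hπ : ∀ σ, 0 < π σ) [Nonempty Ω] (A B : Matrix Ω Ω ℝ) :
    opNorm π (A * B) ≤ opNorm π A * opNorm π B := by
  apply opNorm_le hπ
  intro f
  rw [← Matrix.mulVec_mulVec]
  calc piNorm π (A.mulVec (B.mulVec f))
      ≤ opNorm π A * piNorm π (B.mulVec f) := piNorm_mulVec_le hπ A _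
  _ ≤ opNorm π A * (opNorm π B * piNorm π f) :=
      mul_le_mul_of_nonneg_left (piNorm_mulVec_le hπ B f) (opNorm_nonneg hπ A)
  _ = opNorm π A * opNorm π B * piNorm π f := (mul_assoc _ _ _).symm

end OpNormLemmas

section Gibbs
variable {V S : Type*} [Fintype V] [Fintype S] [DecidableEq V] [DecidableEq S]
variable {π : (V → S) → ℝ}

lemma sum_over_updates (σ : V → S) (x : V) (F : (V → S) → ℝ)
    (hF : ∀ τ, (¬ ∃ s, τ = Function.update σ x s) → F τ = 0) :
    ∑ τ, F τ = ∑ s, F (Function.update σ x s) := by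
  have hinj : ∀ s ∈ (univ : Finset S), ∀ t ∈ (univ : Finset S),
      Function.update σ x s = Function.update σ x t → s = t := by
    intro s _ t _ h
    have := congrFun h x
    simpa using this
  have h1 : ∑ τ ∈ (univ : Finset S).image (Function.update σ x), F τ
      = ∑ s, F (Function.update σ x s) := Finset.sum_image hinj
  have h2 : ∑ τ ∈ (univ : Finset S).image (Function.update σ x), F τ = ∑ τ, F τ := by
    apply Finset.sum_subset (Finset.subset_univ _)
    intro τ _ hτ
    apply hF
    rintro ⟨s, rfl⟩
    exact hτ (Finset.mem_image.mpr ⟨s, Finset.mem_univ s, rfl⟩)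
  rw [← h2, h1]

lemma Zpos [Nonempty S] (hπ : ∀ σ, 0 < π σ) (σ : V → S) (x : V) :
    0 < ∑ t, π (Function.update σ x t) :=
  Finset.sum_pos (fun t _ => hπ _) Finset.univ_nonempty

lemma gibbsT_apply_update (x : V) (σ : V → S) (s : S) :
    gibbsT π x σ (Function.update σ x s)
      = π (Function.update σ x s) / ∑ t, π (Function.update σ x t) := by
  unfold gibbsT
  exact if_pos ⟨s, rfl⟩

lemma gibbsT_apply_of_not {x : V} {σ τ : V → S} (h : ¬ ∃ s, τ = Function.update σ x s) :
    gibbsT π x σ τ = 0 := by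
  unfold gibbsT
  exact if_neg h

lemma eq_update_symm {σ τ : V → S} {x : V} {s : S} (h : τ = Function.update σ x s) :
    σ = Function.update τ x (σ x) := by
  subst h
  funext y
  rcases eq_or_ne y x with rfl | hy
  · simp
  · simp [Function.update_of_ne hy]

lemma exists_update_symm {σ τ : V → S} {x : V} :
    (∃ s, τ = Function.update σ x s) ↔ (∃ u, σ = Function.update τ x u) :=
  ⟨fun ⟨_, h⟩ => ⟨σ x, eq_update_symm h⟩, fun ⟨_, h⟩ => ⟨τ x, eq_update_symm h⟩⟩

lemma Z_update (σ : V → S) (x : V) (u : S) :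
    ∑ t, π (Function.update (Function.update σ x u) x t) = ∑ t, π (Function.update σ x t) := by
  simp [Function.update_idem]

lemma gibbsT_rowsum [Nonempty S] (hπ : ∀ σ, 0 < π σ) (x : V) (σ : V → S) :
    ∑ τ, gibbsT π x σ τ = 1 := by
  rw [sum_over_updates σ x _ (fun τ h => gibbsT_apply_of_not h)]
  have : ∀ s : S, gibbsT π x σ (Function.update σ x s)
      = π (Function.update σ x s) / ∑ t, π (Function.update σ x t) :=
    fun s => gibbsT_apply_update x σ s
  rw [Finset.sum_congr rfl fun s _ => this s, ← Finset.sum_div,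
    div_self (Zpos hπ σ x).ne']

lemma gibbsT_stationary [Nonempty S] (hπ : ∀ σ, 0 < π σ) (x : V) (τ : V → S) :
    ∑ σ, π σ * gibbsT π x σ τ = π τ := by
  rw [sum_over_updates τ x (fun σ => π σ * gibbsT π x σ τ) ?h0]
  case h0 =>
    intro σ h
    show π σ * gibbsT π x σ τ = 0
    rw [gibbsT_apply_of_not (fun hex => h (exists_update_symm.mp hex)), mul_zero]
  have hterm : ∀ u : S, π (Function.update τ x u) * gibbsT π x (Function.update τ x u) τ
      = π (Function.update τ x u) * (π τ / ∑ t, π (Function.update τ x t)) := by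
    intro u
    congr 1
    have hrep : τ = Function.update (Function.update τ x u) x (τ x) := by
      rw [Function.update_idem, Function.update_eq_self]
    unfold gibbsT
    rw [if_pos ⟨τ x, hrep⟩, Z_update]
  rw [Finset.sum_congr rfl fun u _ => hterm u, ← Finset.sum_mul, mul_comm,
    div_mul_cancel₀ _ (Zpos hπ τ x).ne']

lemma gibbsT_mulVec [Nonempty S] (x : V) (f : (V → S) → ℝ) (σ : V → S) :
    (gibbsT π x).mulVec f σ
      = ∑ s, (π (Function.update σ x s) / ∑ t, π (Function.update σ x t))
          * f (Function.update σ x s) := by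
  rw [Matrix.mulVec, dotProduct]
  have hF : ∀ τ, (¬ ∃ s, τ = Function.update σ x s) → gibbsT π x σ τ * f τ = 0 :=
    fun τ h => by rw [gibbsT_apply_of_not h, zero_mul]
  rw [sum_over_updates σ x (fun τ => gibbsT π x σ τ * f τ) hF]
  exact Finset.sum_congr rfl fun s _ => by rw [gibbsT_apply_update]

lemma gibbsT_idem [Nonempty S] (hπ : ∀ σ, 0 < π σ) (x : V) :
    gibbsT π x * gibbsT π x = gibbsT π x := by
  ext σ τ
  rw [Matrix.mul_apply]
  have hF : ∀ ρ, (¬ ∃ s, ρ = Function.update σ x s) →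
      gibbsT π x σ ρ * gibbsT π x ρ τ = 0 :=
    fun ρ h => by rw [gibbsT_apply_of_not h, zero_mul]
  rw [sum_over_updates σ x (fun ρ => gibbsT π x σ ρ * gibbsT π x ρ τ) hF]
  set Z := ∑ t, π (Function.update σ x t) with hZ
  have hZ0 : Z ≠ 0 := (Zpos hπ σ x).ne'
  by_cases hc : ∃ s, τ = Function.update σ x s
  · obtain ⟨s, rfl⟩ := hc
    have hterm : ∀ u : S,
        gibbsT π x σ (Function.update σ x u) *
          gibbsT π x (Function.update σ x u) (Function.update σ x s)
        = π (Function.update σ x u) * (π (Function.update σ x s) / (Z * Z)) := by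
      intro u
      rw [gibbsT_apply_update]
      have hrep : Function.update σ x s
          = Function.update (Function.update σ x u) x s := by
        rw [Function.update_idem]
      unfold gibbsT
      rw [if_pos ⟨s, hrep⟩, Z_update, ← hZ]
      field_simp
    rw [Finset.sum_congr rfl fun u _ => hterm u, ← Finset.sum_mul, gibbsT_apply_update, ← hZ]
    field_simp
  · rw [gibbsT_apply_of_not hc]
    apply Finset.sum_eq_zero
    intro u _
    have : gibbsT π x (Function.update σ x u) τ = 0 := by
      apply gibbsT_apply_of_not
      rintro ⟨s, rfl⟩
      exact hc ⟨s, by rw [Function.update_idem]⟩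
    rw [this, mul_zero]

lemma gibbsT_selfAdjoint [Nonempty S] (hπ : ∀ σ, 0 < π σ) (x : V) :
    adjointM π (gibbsT π x) = gibbsT π x := by
  ext σ τ
  show π τ * gibbsT π x τ σ / π σ = gibbsT π x σ τ
  by_cases hc : ∃ s, τ = Function.update σ x s
  · obtain ⟨s, hs⟩ := hc
    have hστ : σ = Function.update τ x (σ x) := eq_update_symm hs
    have hZ : (∑ t, π (Function.update τ x t)) = ∑ t, π (Function.update σ x t) := by
      rw [hs, Z_update]
    unfold gibbsT
    rw [if_pos ⟨σ x, hστ⟩, if_pos ⟨s, hs⟩, hZ]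
    have h1 : π σ ≠ 0 := (hπ σ).ne'
    have h2 : (∑ t, π (Function.update σ x t)) ≠ 0 := (Zpos hπ σ x).ne'
    field_simp
  · rw [gibbsT_apply_of_not hc,
      gibbsT_apply_of_not (fun hex => hc (exists_update_symm.mpr hex))]
    simp

lemma gibbsT_mul_Spi [Nonempty S] (hπ : ∀ σ, 0 < π σ) (x : V) :
    gibbsT π x * Spi π = Spi π := by
  ext σ τ
  rw [Matrix.mul_apply]
  show (∑ ρ, gibbsT π x σ ρ * π τ) = π τ
  rw [← Finset.sum_mul, gibbsT_rowsum hπ x σ, one_mul]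

lemma Spi_mul_gibbsT [Nonempty S] (hπ : ∀ σ, 0 < π σ) (x : V) :
    Spi π * gibbsT π x = Spi π := by
  ext σ τ
  rw [Matrix.mul_apply]
  exact gibbsT_stationary hπ x τ

lemma Spi_mul_Spi (hsum : ∑ σ : V → S, π σ = 1) : (Spi π : Matrix (V → S) (V → S) ℝ) * Spi π = Spi π := by
  ext σ τ
  rw [Matrix.mul_apply]
  show (∑ ρ : V → S, π ρ * π τ) = π τ
  rw [← Finset.sum_mul, hsum, one_mul]

lemma gibbsT_contraction [Nonempty S] (hπ : ∀ σ, 0 < π σ) (x : V) (f : (V → S) → ℝ) :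
    piNorm π ((gibbsT π x).mulVec f) ≤ piNorm π f := by
  apply Real.sqrt_le_sqrt
  have key : ∀ σ, (gibbsT π x).mulVec f σ * (gibbsT π x).mulVec f σ
      ≤ (gibbsT π x).mulVec (fun ρ => f ρ * f ρ) σ := by
    intro σ
    rw [gibbsT_mulVec, gibbsT_mulVec]
    set Z := ∑ t, π (Function.update σ x t) with hZdef
    have hZ : 0 < Z := Zpos hπ σ x
    have hw : ∀ s : S, 0 ≤ π (Function.update σ x s) / Z :=
      fun s => div_nonneg (hπ _).le hZ.le
    set w : S → ℝ := fun s => π (Function.update σ x s) / Z with hwdef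
    set v : S → ℝ := fun s => f (Function.update σ x s) with hvdef
    have hsumw : ∑ s, w s = 1 := by
      rw [hwdef, ← Finset.sum_div, div_self hZ.ne']
    have h1 : (∑ s, w s * v s) = ∑ s, Real.sqrt (w s) * (Real.sqrt (w s) * v s) := by
      refine Finset.sum_congr rfl fun s _ => ?_
      rw [← mul_assoc, Real.mul_self_sqrt (hw s)]
    calc (∑ s, w s * v s) * (∑ s, w s * v s)
        = (∑ s, Real.sqrt (w s) * (Real.sqrt (w s) * v s))^2 := by rw [← h1, sq]
    _ ≤ (∑ s, Real.sqrt (w s)^2) * ∑ s, (Real.sqrt (w s) * v s)^2 :=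
        Finset.sum_mul_sq_le_sq_mul_sq _ _ _
    _ = (∑ s, w s) * ∑ s, w s * (v s * v s) := by
        congr 1
        · exact Finset.sum_congr rfl fun s _ => Real.sq_sqrt (hw s)
        · refine Finset.sum_congr rfl fun s _ => ?_
          rw [mul_pow, Real.sq_sqrt (hw s), sq]
    _ = ∑ s, w s * (v s * v s) := by rw [hsumw, one_mul]
  have swap : ∑ σ, ((gibbsT π x).mulVec (fun ρ => f ρ * f ρ)) σ * π σ
      = ∑ τ, (f τ * f τ) * π τ := by
    have : ∀ σ, ((gibbsT π x).mulVec (fun ρ => f ρ * f ρ)) σ * π σ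
        = ∑ τ, (π σ * gibbsT π x σ τ) * (f τ * f τ) := by
      intro σ
      rw [Matrix.mulVec, dotProduct, Finset.sum_mul]
      exact Finset.sum_congr rfl fun τ _ => by ring
    rw [Finset.sum_congr rfl fun σ _ => this σ, Finset.sum_comm]
    refine Finset.sum_congr rfl fun τ _ => ?_
    rw [← Finset.sum_mul, gibbsT_stationary hπ x τ]
    ring
  calc piInner π ((gibbsT π x).mulVec f) ((gibbsT π x).mulVec f)
      = ∑ σ, ((gibbsT π x).mulVec f σ * (gibbsT π x).mulVec f σ) * π σ := rfl
  _ ≤ ∑ σ, ((gibbsT π x).mulVec (fun ρ => f ρ * f ρ)) σ * π σ :=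
      Finset.sum_le_sum fun σ _ => mul_le_mul_of_nonneg_right (key σ) (hπ σ).le
  _ = ∑ τ, (f τ * f τ) * π τ := swap
  _ = piInner π f f := rfl

end Gibbs


section Gibbs2
variable {V S : Type*} [Fintype V] [Fintype S] [DecidableEq V] [DecidableEq S]
variable {π : (V → S) → ℝ}

lemma gibbsT_mul_apply_of_ne [Nonempty S] (hπ : ∀ σ, 0 < π σ) {x y : V} (hxy : x ≠ y)
    (hinv : ∀ (σ : V → S) (s u : S),
      π (Function.update (Function.update σ x s) y u) /
          (∑ t, π (Function.update (Function.update σ x s) y t))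
        = π (Function.update σ y u) / (∑ t, π (Function.update σ y t)))
    (σ τ : V → S) :
    (gibbsT π x * gibbsT π y) σ τ =
      if ∃ s u, τ = Function.update (Function.update σ x s) y u
      then (π (Function.update σ x (τ x)) / ∑ t, π (Function.update σ x t)) *
           (π (Function.update σ y (τ y)) / ∑ t, π (Function.update σ y t))
      else 0 := by
  rw [Matrix.mul_apply]
  have hF : ∀ ρ, (¬ ∃ s, ρ = Function.update σ x s) →
      gibbsT π x σ ρ * gibbsT π y ρ τ = 0 :=
    fun ρ h => by rw [gibbsT_apply_of_not h, zero_mul]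
  rw [sum_over_updates σ x (fun ρ => gibbsT π x σ ρ * gibbsT π y ρ τ) hF]
  by_cases hc : ∃ s u, τ = Function.update (Function.update σ x s) y u
  · rw [if_pos hc]
    obtain ⟨s₀, u₀, hτ⟩ := hc
    have hx : τ x = s₀ := by
      rw [hτ, Function.update_of_ne hxy, Function.update_self]
    have hy : τ y = u₀ := by rw [hτ, Function.update_self]
    have hrep : τ = Function.update (Function.update σ x (τ x)) y (τ y) := by
      rw [hx, hy]; exact hτ
    rw [Finset.sum_eq_single (τ x) ?h0 ?h1]
    case h0 =>
      intro s _ hs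
      have hz : gibbsT π y (Function.update σ x s) τ = 0 := by
        apply gibbsT_apply_of_not
        rintro ⟨u, hu⟩
        apply hs
        have hfx := congrFun hu x
        rw [Function.update_of_ne hxy, Function.update_self] at hfx
        exact hfx.symm
      rw [hz, mul_zero]
    case h1 =>
      intro hmem; exact absurd (Finset.mem_univ _) hmem
    rw [gibbsT_apply_update]
    congr 1
    unfold gibbsT
    rw [if_pos ⟨τ y, hrep⟩]
    have hπτ : π τ = π (Function.update (Function.update σ x (τ x)) y (τ y)) := by
      rw [← hrep]
    rw [hπτ, hinv σ (τ x) (τ y)]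
  · rw [if_neg hc]
    apply Finset.sum_eq_zero
    intro s _
    have hz : gibbsT π y (Function.update σ x s) τ = 0 := by
      apply gibbsT_apply_of_not
      rintro ⟨u, hu⟩
      exact hc ⟨s, u, hu⟩
    rw [hz, mul_zero]

lemma gibbsT_commute [Nonempty S] (hπ : ∀ σ, 0 < π σ) {x y : V} (hxy : x ≠ y)
    (hinvxy : ∀ (σ : V → S) (s u : S),
      π (Function.update (Function.update σ x s) y u) /
          (∑ t, π (Function.update (Function.update σ x s) y t))
        = π (Function.update σ y u) / (∑ t, π (Function.update σ y t)))
    (hinvyx : ∀ (σ : V → S) (s u : S),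
      π (Function.update (Function.update σ y s) x u) /
          (∑ t, π (Function.update (Function.update σ y s) x t))
        = π (Function.update σ x u) / (∑ t, π (Function.update σ x t))) :
    gibbsT π x * gibbsT π y = gibbsT π y * gibbsT π x := by
  ext σ τ
  rw [gibbsT_mul_apply_of_ne hπ hxy hinvxy σ τ,
    gibbsT_mul_apply_of_ne hπ hxy.symm hinvyx σ τ]
  have hcond : (∃ s u, τ = Function.update (Function.update σ x s) y u)
      ↔ (∃ s u, τ = Function.update (Function.update σ y s) x u) := by
    constructor
    · rintro ⟨s, u, rfl⟩
      exact ⟨u, s, Function.update_comm hxy s u σ⟩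
    · rintro ⟨s, u, rfl⟩
      exact ⟨u, s, Function.update_comm hxy.symm s u σ⟩
  by_cases h : ∃ s u, τ = Function.update (Function.update σ x s) y u
  · rw [if_pos h, if_pos (hcond.mp h), mul_comm]
  · rw [if_neg h, if_neg (fun h' => h (hcond.mpr h'))]

end Gibbs2

section ListLemmas
variable {M : Type*} [Monoid M]

lemma list_prod_mul_mem {a : M} : ∀ (l : List M), a ∈ l → (∀ b ∈ l, Commute a b) →
    a * a = a → l.prod * a = l.prod := by
  intro l
  induction l with
  | nil => intro h _ _; cases h
  | cons h t ih =>
    intro ha hcomm hidem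
    rw [List.prod_cons]
    rcases List.mem_cons.mp ha with rfl | hat
    · rw [mul_assoc,
        ← (Commute.list_prod_right t a (fun b hb => hcomm b (List.mem_cons_of_mem _ hb))).eq,
        ← mul_assoc, hidem]
    · rw [mul_assoc, ih hat (fun b hb => hcomm b (List.mem_cons_of_mem _ hb)) hidem]

lemma mem_mul_list_prod {a : M} : ∀ (l : List M), a ∈ l → (∀ b ∈ l, Commute a b) →
    a * a = a → a * l.prod = l.prod := by
  intro l
  induction l with
  | nil => intro h _ _; cases h
  | cons h t ih =>
    intro ha hcomm hidem
    rw [List.prod_cons]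
    rcases List.mem_cons.mp ha with rfl | hat
    · rw [← mul_assoc, hidem]
    · rw [← mul_assoc, (hcomm h (List.mem_cons_self)).eq, mul_assoc,
        ih hat (fun b hb => hcomm b (List.mem_cons_of_mem _ hb)) hidem]

lemma list_prod_idem : ∀ (l : List M), l.Pairwise Commute → (∀ a ∈ l, a * a = a) →
    l.prod * l.prod = l.prod := by
  intro l
  induction l with
  | nil => intro _ _; simp
  | cons h t ih =>
    intro hp hidem
    obtain ⟨hh, hp'⟩ := List.pairwise_cons.mp hp
    have hc : Commute h t.prod := Commute.list_prod_right t h hh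
    rw [List.prod_cons, mul_assoc, ← mul_assoc t.prod h, ← hc.eq, mul_assoc, ← mul_assoc,
      hidem h (List.mem_cons_self),
      ih hp' (fun a ha => hidem a (List.mem_cons_of_mem _ ha))]

end ListLemmas

section AdjointLemmas
variable {Ω : Type*} [Fintype Ω] [DecidableEq Ω] {π : Ω → ℝ}

lemma adjointM_one (hπ : ∀ σ, 0 < π σ) : adjointM π (1 : Matrix Ω Ω ℝ) = 1 := by
  ext σ τ
  show π τ * (1 : Matrix Ω Ω ℝ) τ σ / π σ = (1 : Matrix Ω Ω ℝ) σ τ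
  rcases eq_or_ne σ τ with rfl | h
  · rw [Matrix.one_apply_eq, mul_one, div_self (hπ σ).ne']
  · rw [Matrix.one_apply_ne (Ne.symm h), Matrix.one_apply_ne h]
    simp

lemma adjointM_mul (hπ : ∀ σ, 0 < π σ) (A B : Matrix Ω Ω ℝ) :
    adjointM π (A * B) = adjointM π B * adjointM π A := by
  ext σ τ
  simp only [adjointM, Matrix.mul_apply]
  rw [Finset.mul_sum, Finset.sum_div]
  refine Finset.sum_congr rfl fun ρ _ => ?_
  have h1 : π ρ ≠ 0 := (hπ ρ).ne'
  have h2 : π σ ≠ 0 := (hπ σ).ne'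
  field_simp

lemma adjointM_list_prod (hπ : ∀ σ, 0 < π σ) : ∀ (l : List (Matrix Ω Ω ℝ)),
    l.Pairwise Commute → (∀ A ∈ l, adjointM π A = A) → adjointM π l.prod = l.prod := by
  intro l
  induction l with
  | nil => intro _ _; simpa using adjointM_one hπ
  | cons h t ih =>
    intro hp hadj
    obtain ⟨hh, hp'⟩ := List.pairwise_cons.mp hp
    rw [List.prod_cons, adjointM_mul hπ,
      ih hp' (fun A hA => hadj A (List.mem_cons_of_mem _ hA)),
      hadj h (List.mem_cons_self), ← (Commute.list_prod_right t h hh).eq]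

lemma list_prod_mul_Spi : ∀ (l : List (Matrix Ω Ω ℝ)), (∀ A ∈ l, A * Spi π = Spi π) →
    l.prod * Spi π = Spi π := by
  intro l
  induction l with
  | nil => intro _; simp
  | cons h t ih =>
    intro hfix
    rw [List.prod_cons, mul_assoc, ih (fun A hA => hfix A (List.mem_cons_of_mem _ hA)),
      hfix h (List.mem_cons_self)]

lemma Spi_mul_list_prod : ∀ (l : List (Matrix Ω Ω ℝ)), (∀ A ∈ l, Spi π * A = Spi π) →
    Spi π * l.prod = Spi π := by
  intro l
  induction l with
  | nil => intro _; simp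
  | cons h t ih =>
    intro hfix
    rw [List.prod_cons, ← mul_assoc, hfix h (List.mem_cons_self),
      ih (fun A hA => hfix A (List.mem_cons_of_mem _ hA))]

lemma list_prod_contraction : ∀ (l : List (Matrix Ω Ω ℝ)),
    (∀ A ∈ l, ∀ f, piNorm π (A.mulVec f) ≤ piNorm π f) →
    ∀ f, piNorm π (l.prod.mulVec f) ≤ piNorm π f := by
  intro l
  induction l with
  | nil => intro _ f; rw [List.prod_nil, Matrix.one_mulVec]
  | cons h t ih =>
    intro hc f
    rw [List.prod_cons, ← Matrix.mulVec_mulVec]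
    exact le_trans (hc h (List.mem_cons_self) _)
      (ih (fun A hA => hc A (List.mem_cons_of_mem _ hA)) f)

end AdjointLemmas

/-- for a bipartite distribution, the multiplicative reversiblization
`R(P_AS) = P_AS P_AS*` of the alternating-scan kernel satisfies
`‖R(P_AS) - S_π‖_π ≤ ‖P_RU - S_π‖_π²`. -/
theorem reversiblization_norm_bound {n₁ n₂ : ℕ} {S : Type*} [Fintype S] [DecidableEq S]
    (hn₁ : 0 < n₁) (hn₂ : 0 < n₂)
    (π : (Fin n₁ ⊕ Fin n₂ → S) → ℝ)
    (hπpos : ∀ σ, 0 < π σ) (hπsum : ∑ σ, π σ = 1) (hbip : IsBipartite π) :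
    opNorm π (PAS π * adjointM π (PAS π) - Spi π) ≤ opNorm π (PRU π - Spi π) ^ 2 := by
  haveI hΩ : Nonempty (Fin n₁ ⊕ Fin n₂ → S) := by
    by_contra h
    rw [not_nonempty_iff] at h
    have h0 : (∑ σ : Fin n₁ ⊕ Fin n₂ → S, π σ) = 0 := by
      haveI := h
      simp
    rw [h0] at hπsum
    norm_num at hπsum
  haveI hS : Nonempty S := ⟨(Classical.arbitrary (Fin n₁ ⊕ Fin n₂ → S)) (Sum.inl ⟨0, hn₁⟩)⟩
  -- commutation of same-class updates
  have hcomm1 : ∀ i j : Fin n₁, i ≠ j →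
      gibbsT π (Sum.inl i) * gibbsT π (Sum.inl j)
        = gibbsT π (Sum.inl j) * gibbsT π (Sum.inl i) := by
    intro i j hij
    refine gibbsT_commute hπpos (by simp [hij]) ?_ ?_
    · intro σ s u
      exact hbip.1 j (Function.update σ (Sum.inl i) s) σ
        (fun k => Function.update_of_ne (by simp) _ _) u
    · intro σ s u
      exact hbip.1 i (Function.update σ (Sum.inl j) s) σ
        (fun k => Function.update_of_ne (by simp) _ _) u
  have hcomm2 : ∀ i j : Fin n₂, i ≠ j →
      gibbsT π (Sum.inr i) * gibbsT π (Sum.inr j)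
        = gibbsT π (Sum.inr j) * gibbsT π (Sum.inr i) := by
    intro i j hij
    refine gibbsT_commute hπpos (by simp [hij]) ?_ ?_
    · intro σ s u
      exact hbip.2 j (Function.update σ (Sum.inr i) s) σ
        (fun k => Function.update_of_ne (by simp) _ _) u
    · intro σ s u
      exact hbip.2 i (Function.update σ (Sum.inr j) s) σ
        (fun k => Function.update_of_ne (by simp) _ _) u
  set l1 : List (Matrix (Fin n₁ ⊕ Fin n₂ → S) (Fin n₁ ⊕ Fin n₂ → S) ℝ) :=
    List.ofFn (fun i : Fin n₁ => gibbsT π (Sum.inl i)) with hl1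
  set l2 : List (Matrix (Fin n₁ ⊕ Fin n₂ → S) (Fin n₁ ⊕ Fin n₂ → S) ℝ) :=
    List.ofFn (fun j : Fin n₂ => gibbsT π (Sum.inr j)) with hl2
  have hP1 : PAS1 π = l1.prod := rfl
  have hP2 : PAS2 π = l2.prod := rfl
  have hpair1 : l1.Pairwise Commute := by
    rw [hl1, List.pairwise_ofFn]
    intro i j hij
    exact hcomm1 i j (ne_of_lt hij)
  have hpair2 : l2.Pairwise Commute := by
    rw [hl2, List.pairwise_ofFn]
    intro i j hij
    exact hcomm2 i j (ne_of_lt hij)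
  have hcommall1 : ∀ i : Fin n₁, ∀ B ∈ l1, Commute (gibbsT π (Sum.inl i)) B := by
    intro i B hB
    obtain ⟨j, rfl⟩ := List.mem_ofFn.mp hB
    rcases eq_or_ne i j with rfl | hij
    · exact Commute.refl _
    · exact hcomm1 i j hij
  have hcommall2 : ∀ j : Fin n₂, ∀ B ∈ l2, Commute (gibbsT π (Sum.inr j)) B := by
    intro j B hB
    obtain ⟨k, rfl⟩ := List.mem_ofFn.mp hB
    rcases eq_or_ne j k with rfl | hjk
    · exact Commute.refl _
    · exact hcomm2 j k hjk
  have hmem1 : ∀ i : Fin n₁, gibbsT π (Sum.inl i) ∈ l1 :=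
    fun i => List.mem_ofFn.mpr ⟨i, rfl⟩
  have hmem2 : ∀ j : Fin n₂, gibbsT π (Sum.inr j) ∈ l2 :=
    fun j => List.mem_ofFn.mpr ⟨j, rfl⟩
  -- absorption
  have habs1r : ∀ i : Fin n₁, PAS1 π * gibbsT π (Sum.inl i) = PAS1 π := by
    intro i
    rw [hP1]
    exact list_prod_mul_mem l1 (hmem1 i) (hcommall1 i) (gibbsT_idem hπpos _)
  have habs1l : ∀ i : Fin n₁, gibbsT π (Sum.inl i) * PAS1 π = PAS1 π := by
    intro i
    rw [hP1]
    exact mem_mul_list_prod l1 (hmem1 i) (hcommall1 i) (gibbsT_idem hπpos _)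
  have habs2r : ∀ j : Fin n₂, PAS2 π * gibbsT π (Sum.inr j) = PAS2 π := by
    intro j
    rw [hP2]
    exact list_prod_mul_mem l2 (hmem2 j) (hcommall2 j) (gibbsT_idem hπpos _)
  have habs2l : ∀ j : Fin n₂, gibbsT π (Sum.inr j) * PAS2 π = PAS2 π := by
    intro j
    rw [hP2]
    exact mem_mul_list_prod l2 (hmem2 j) (hcommall2 j) (gibbsT_idem hπpos _)
  have hP2sq : PAS2 π * PAS2 π = PAS2 π := by
    rw [hP2]
    exact list_prod_idem l2 hpair2
      (fun A hA => by obtain ⟨k, rfl⟩ := List.mem_ofFn.mp hA; exact gibbsT_idem hπpos _)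
  -- adjoints
  have hadj1 : adjointM π (PAS1 π) = PAS1 π := by
    rw [hP1]
    exact adjointM_list_prod hπpos l1 hpair1
      (fun A hA => by obtain ⟨k, rfl⟩ := List.mem_ofFn.mp hA; exact gibbsT_selfAdjoint hπpos _)
  have hadj2 : adjointM π (PAS2 π) = PAS2 π := by
    rw [hP2]
    exact adjointM_list_prod hπpos l2 hpair2
      (fun A hA => by obtain ⟨k, rfl⟩ := List.mem_ofFn.mp hA; exact gibbsT_selfAdjoint hπpos _)
  have hPASadj : adjointM π (PAS π) = PAS2 π * PAS1 π := by
    rw [PAS, adjointM_mul hπpos, hadj1, hadj2]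
  -- Spi fixing
  have hfix1r : PAS1 π * Spi π = Spi π := by
    rw [hP1]
    exact list_prod_mul_Spi l1
      (fun A hA => by obtain ⟨k, rfl⟩ := List.mem_ofFn.mp hA; exact gibbsT_mul_Spi hπpos _)
  have hfix1l : Spi π * PAS1 π = Spi π := by
    rw [hP1]
    exact Spi_mul_list_prod l1
      (fun A hA => by obtain ⟨k, rfl⟩ := List.mem_ofFn.mp hA; exact Spi_mul_gibbsT hπpos _)
  have hfix2r : PAS2 π * Spi π = Spi π := by
    rw [hP2]
    exact list_prod_mul_Spi l2
      (fun A hA => by obtain ⟨k, rfl⟩ := List.mem_ofFn.mp hA; exact gibbsT_mul_Spi hπpos _)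
  have hfix2l : Spi π * PAS2 π = Spi π := by
    rw [hP2]
    exact Spi_mul_list_prod l2
      (fun A hA => by obtain ⟨k, rfl⟩ := List.mem_ofFn.mp hA; exact Spi_mul_gibbsT hπpos _)
  -- cardinality coefficient
  have hnpos : (0:ℝ) < (n₁ : ℝ) + n₂ := by
    have h1 : (0:ℝ) < n₁ := by exact_mod_cast hn₁
    have h2 : (0:ℝ) ≤ n₂ := Nat.cast_nonneg n₂
    linarith
  -- PRU sandwich identities
  have hmid1 : ∀ x : Fin n₁ ⊕ Fin n₂, PAS1 π * gibbsT π x * PAS2 π = PAS π := by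
    rintro (i | j)
    · rw [habs1r i]; rfl
    · rw [mul_assoc, habs2l j]; rfl
  have hmid2 : ∀ x : Fin n₁ ⊕ Fin n₂, PAS2 π * gibbsT π x * PAS1 π = PAS2 π * PAS1 π := by
    rintro (i | j)
    · rw [mul_assoc, habs1l i]
    · rw [habs2r j]
  have hcast : (1 / (2 * ((n₁:ℝ) + n₂))) * ((n₁ + n₂ : ℕ) : ℝ) = 1/2 := by
    have hne : ((n₁:ℝ) + n₂) ≠ 0 := hnpos.ne'
    push_cast
    field_simp
  have hsand1 : PAS1 π * PRU π * PAS2 π = PAS π := by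
    rw [PRU, mul_add, add_mul, Matrix.mul_smul, Matrix.smul_mul, mul_one,
      Matrix.mul_smul, Matrix.smul_mul, Finset.mul_sum, Finset.sum_mul]
    rw [Finset.sum_congr rfl fun x _ => hmid1 x, Finset.sum_const, Finset.card_univ,
      Fintype.card_sum, Fintype.card_fin, Fintype.card_fin,
      ← Nat.cast_smul_eq_nsmul ℝ, smul_smul, hcast]
    rw [show PAS1 π * PAS2 π = PAS π from rfl, ← add_smul]
    norm_num
  have hsand2 : PAS2 π * PRU π * PAS1 π = PAS2 π * PAS1 π := by
    rw [PRU, mul_add, add_mul, Matrix.mul_smul, Matrix.smul_mul, mul_one,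
      Matrix.mul_smul, Matrix.smul_mul, Finset.mul_sum, Finset.sum_mul]
    rw [Finset.sum_congr rfl fun x _ => hmid2 x, Finset.sum_const, Finset.card_univ,
      Fintype.card_sum, Fintype.card_fin, Fintype.card_fin,
      ← Nat.cast_smul_eq_nsmul ℝ, smul_smul, hcast, ← add_smul]
    norm_num
  have key1 : PAS1 π * (PRU π - Spi π) * PAS2 π = PAS π - Spi π := by
    rw [mul_sub, sub_mul, hsand1]
    rw [show PAS1 π * Spi π * PAS2 π = Spi π from by rw [hfix1r, hfix2l]]
  have key2 : PAS2 π * (PRU π - Spi π) * PAS1 π = PAS2 π * PAS1 π - Spi π := by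
    rw [mul_sub, sub_mul, hsand2]
    rw [show PAS2 π * Spi π * PAS1 π = Spi π from by rw [hfix2r, hfix1l]]
  have key3 : PAS π * adjointM π (PAS π) - Spi π
      = (PAS π - Spi π) * (adjointM π (PAS π) - Spi π) := by
    have h1 : PAS π * Spi π = Spi π := by
      rw [PAS, mul_assoc, hfix2r, hfix1r]
    have h2 : Spi π * adjointM π (PAS π) = Spi π := by
      rw [hPASadj, ← mul_assoc, hfix2l, hfix1l]
    have h3 : Spi π * Spi π = Spi π := Spi_mul_Spi hπsum
    rw [sub_mul, mul_sub, mul_sub, h1, h2, h3, sub_self, sub_zero]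
  have key4 : PAS π * adjointM π (PAS π) - Spi π
      = PAS1 π * ((PRU π - Spi π) * (PAS2 π * ((PRU π - Spi π) * PAS1 π))) := by
    rw [key3, ← key1, hPASadj, ← key2]
    simp only [Matrix.mul_assoc]
    rw [← Matrix.mul_assoc (PAS2 π) (PAS2 π), hP2sq]
  -- norms
  have hcontr1 : ∀ f, piNorm π ((PAS1 π).mulVec f) ≤ piNorm π f := by
    rw [hP1]
    exact list_prod_contraction l1
      (fun A hA => by obtain ⟨k, rfl⟩ := List.mem_ofFn.mp hA; exact gibbsT_contraction hπpos _)
  have hcontr2 : ∀ f, piNorm π ((PAS2 π).mulVec f) ≤ piNorm π f := by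
    rw [hP2]
    exact list_prod_contraction l2
      (fun A hA => by obtain ⟨k, rfl⟩ := List.mem_ofFn.mp hA; exact gibbsT_contraction hπpos _)
  have hp1le : opNorm π (PAS1 π) ≤ 1 :=
    opNorm_le hπpos (fun f => by rw [one_mul]; exact hcontr1 f)
  have hp2le : opNorm π (PAS2 π) ≤ 1 :=
    opNorm_le hπpos (fun f => by rw [one_mul]; exact hcontr2 f)
  set Mx := PRU π - Spi π with hMx
  have ha : 0 ≤ opNorm π Mx := opNorm_nonneg hπpos _
  have h4 : opNorm π (Mx * PAS1 π) ≤ opNorm π Mx := by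
    calc opNorm π (Mx * PAS1 π) ≤ opNorm π Mx * opNorm π (PAS1 π) := opNorm_mul_le hπpos _ _
    _ ≤ opNorm π Mx * 1 := mul_le_mul_of_nonneg_left hp1le ha
    _ = opNorm π Mx := mul_one _
  have h3 : opNorm π (PAS2 π * (Mx * PAS1 π)) ≤ opNorm π Mx := by
    calc opNorm π (PAS2 π * (Mx * PAS1 π))
        ≤ opNorm π (PAS2 π) * opNorm π (Mx * PAS1 π) := opNorm_mul_le hπpos _ _
    _ ≤ 1 * opNorm π Mx :=
        mul_le_mul hp2le h4 (opNorm_nonneg hπpos _) zero_le_one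
    _ = opNorm π Mx := one_mul _
  have h2 : opNorm π (Mx * (PAS2 π * (Mx * PAS1 π))) ≤ opNorm π Mx * opNorm π Mx :=
    le_trans (opNorm_mul_le hπpos _ _) (mul_le_mul_of_nonneg_left h3 ha)
  have h1 : opNorm π (PAS1 π * (Mx * (PAS2 π * (Mx * PAS1 π))))
      ≤ opNorm π Mx * opNorm π Mx := by
    calc opNorm π (PAS1 π * (Mx * (PAS2 π * (Mx * PAS1 π))))
        ≤ opNorm π (PAS1 π) * opNorm π (Mx * (PAS2 π * (Mx * PAS1 π))) :=
          opNorm_mul_le hπpos _ _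
    _ ≤ 1 * (opNorm π Mx * opNorm π Mx) :=
        mul_le_mul hp1le h2 (opNorm_nonneg hπpos _) zero_le_one
    _ = opNorm π Mx * opNorm π Mx := one_mul _
  rw [key4, sq]
  exact h1
end

section
/- For the uniform distribution on independent sets of the complete bipartite graph K_{n,n} (state space Ω = {I : I ⊆ L or I ⊆ R}), the number of states is |Ω| = 2^{n+1} − 1, and in the alternating-scan sampler starting from any state in Ω_L = {I : I ⊆ L}, the probability that after one epoch (resampling all of L then all of R) the chain is in Ω_R = {I : I ⊆ R, I ≠ ∅} equals 2^{-n}(1 − 2^{-n}). -/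
open Finset

open Finset

/-- Independent sets of the complete bipartite graph K_{n,n}: a configuration
(indicator of a vertex subset) with no chosen vertex on both sides. -/
def IndepKnn {n : ℕ} (σ : Fin n ⊕ Fin n → Bool) : Prop :=
  ∀ i j : Fin n, ¬(σ (Sum.inl i) = true ∧ σ (Sum.inr j) = true)

instance {n : ℕ} : DecidablePred (IndepKnn (n := n)) := fun _ => by
  unfold IndepKnn; infer_instance

/-- The uniform (unnormalized) distribution on independent sets of K_{n,n}. -/
noncomputable def piKnn (n : ℕ) : (Fin n ⊕ Fin n → Bool) → ℝ :=
  fun σ => if IndepKnn σ then 1 else 0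

/-- One epoch of the alternating scan on K_{n,n}: resample all left vertices in
order, then all right vertices. -/
noncomputable def PASKnn (n : ℕ) :
    Matrix (Fin n ⊕ Fin n → Bool) (Fin n ⊕ Fin n → Bool) ℝ :=
  (List.ofFn fun i : Fin n => gibbsT (piKnn n) (Sum.inl i)).prod *
  (List.ofFn fun j : Fin n => gibbsT (piKnn n) (Sum.inr j)).prod

section Aux

variable {n : ℕ}

lemma indep_of_right_false {σ : Fin n ⊕ Fin n → Bool}
    (hR : ∀ j, σ (Sum.inr j) = false) : IndepKnn σ := fun _ j h => by
  rw [hR j] at h; exact absurd h.2 (by simp)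

lemma indep_of_left_false {σ : Fin n ⊕ Fin n → Bool}
    (hL : ∀ i, σ (Sum.inl i) = false) : IndepKnn σ := fun i _ h => by
  rw [hL i] at h; exact absurd h.1 (by simp)

lemma right_false_of_left_true {σ : Fin n ⊕ Fin n → Bool} (h : IndepKnn σ)
    {i : Fin n} (hi : σ (Sum.inl i) = true) : ∀ j, σ (Sum.inr j) = false := by
  intro j
  cases hj : σ (Sum.inr j)
  · rfl
  · exact absurd ⟨hi, hj⟩ (h i j)

lemma indep_iff (σ : Fin n ⊕ Fin n → Bool) :
    IndepKnn σ ↔ (∀ i, σ (Sum.inl i) = false) ∨ ∀ j, σ (Sum.inr j) = false := by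
  constructor
  · intro h
    by_cases hA : ∀ i, σ (Sum.inl i) = false
    · exact Or.inl hA
    · push_neg at hA
      obtain ⟨i, hi⟩ := hA
      exact Or.inr (right_false_of_left_true h (Bool.ne_false_iff.mp hi))
  · rintro (hA | hB)
    · exact indep_of_left_false hA
    · exact indep_of_right_false hB

lemma piKnn_pos {σ : Fin n ⊕ Fin n → Bool} (h : IndepKnn σ) : piKnn n σ = 1 :=
  if_pos h

lemma piKnn_zero {σ : Fin n ⊕ Fin n → Bool} (h : ¬ IndepKnn σ) : piKnn n σ = 0 :=
  if_neg h

lemma gibbs_left {σ : Fin n ⊕ Fin n → Bool} (hR : ∀ j, σ (Sum.inr j) = false)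
    (i : Fin n) (τ : Fin n ⊕ Fin n → Bool) :
    gibbsT (piKnn n) (Sum.inl i) σ τ =
      (if τ = Function.update σ (Sum.inl i) true then (2:ℝ)⁻¹ else 0) +
      (if τ = Function.update σ (Sum.inl i) false then (2:ℝ)⁻¹ else 0) := by
  have hupd : ∀ b : Bool, IndepKnn (Function.update σ (Sum.inl i) b) := by
    intro b
    apply indep_of_right_false
    intro j
    rw [Function.update_of_ne (by simp)]
    exact hR j
  have hsum : ∑ t : Bool, piKnn n (Function.update σ (Sum.inl i) t) = 2 := by
    rw [Fintype.sum_bool, piKnn_pos (hupd true), piKnn_pos (hupd false)]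
    norm_num
  have hne : Function.update σ (Sum.inl i) true ≠ Function.update σ (Sum.inl i) false := by
    intro hh
    have := congrFun hh (Sum.inl i)
    simp at this
  unfold gibbsT
  by_cases h : ∃ s : Bool, τ = Function.update σ (Sum.inl i) s
  · rw [if_pos h, hsum]
    obtain ⟨s, rfl⟩ := h
    cases s
    · rw [if_neg (fun hh => hne hh.symm), if_pos rfl, piKnn_pos (hupd false)]
      norm_num
    · rw [if_pos rfl, if_neg (fun hh => hne (by rw [← hh])), piKnn_pos (hupd true)]
      norm_num
  · rw [if_neg h, if_neg (fun hh => h ⟨true, hh⟩), if_neg (fun hh => h ⟨false, hh⟩)]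
    norm_num

lemma gibbs_right {σ : Fin n ⊕ Fin n → Bool} (hL : ∀ i, σ (Sum.inl i) = false)
    (j : Fin n) (τ : Fin n ⊕ Fin n → Bool) :
    gibbsT (piKnn n) (Sum.inr j) σ τ =
      (if τ = Function.update σ (Sum.inr j) true then (2:ℝ)⁻¹ else 0) +
      (if τ = Function.update σ (Sum.inr j) false then (2:ℝ)⁻¹ else 0) := by
  have hupd : ∀ b : Bool, IndepKnn (Function.update σ (Sum.inr j) b) := by
    intro b
    apply indep_of_left_false
    intro i
    rw [Function.update_of_ne (by simp)]
    exact hL i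
  have hsum : ∑ t : Bool, piKnn n (Function.update σ (Sum.inr j) t) = 2 := by
    rw [Fintype.sum_bool, piKnn_pos (hupd true), piKnn_pos (hupd false)]
    norm_num
  have hne : Function.update σ (Sum.inr j) true ≠ Function.update σ (Sum.inr j) false := by
    intro hh
    have := congrFun hh (Sum.inr j)
    simp at this
  unfold gibbsT
  by_cases h : ∃ s : Bool, τ = Function.update σ (Sum.inr j) s
  · rw [if_pos h, hsum]
    obtain ⟨s, rfl⟩ := h
    cases s
    · rw [if_neg (fun hh => hne hh.symm), if_pos rfl, piKnn_pos (hupd false)]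
      norm_num
    · rw [if_pos rfl, if_neg (fun hh => hne (by rw [← hh])), piKnn_pos (hupd true)]
      norm_num
  · rw [if_neg h, if_neg (fun hh => h ⟨true, hh⟩), if_neg (fun hh => h ⟨false, hh⟩)]
    norm_num

lemma gibbs_right_forced {σ : Fin n ⊕ Fin n → Bool} (hI : IndepKnn σ)
    {i0 : Fin n} (hi0 : σ (Sum.inl i0) = true) (j : Fin n)
    (τ : Fin n ⊕ Fin n → Bool) :
    gibbsT (piKnn n) (Sum.inr j) σ τ = if τ = σ then 1 else 0 := by
  have hRf : ∀ j', σ (Sum.inr j') = false := right_false_of_left_true hI hi0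
  have hupdt : ¬ IndepKnn (Function.update σ (Sum.inr j) true) := by
    intro h
    exact h i0 j ⟨by rw [Function.update_of_ne (by simp)]; exact hi0,
      Function.update_self _ _ _⟩
  have hupdf : Function.update σ (Sum.inr j) false = σ := by
    conv_lhs => rw [← hRf j]
    exact Function.update_eq_self _ _
  have hsum : ∑ t : Bool, piKnn n (Function.update σ (Sum.inr j) t) = 1 := by
    rw [Fintype.sum_bool, piKnn_zero hupdt, hupdf, piKnn_pos hI]
    norm_num
  have hne : Function.update σ (Sum.inr j) true ≠ σ := by
    intro hh
    have := congrFun hh (Sum.inr j)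
    rw [Function.update_self, hRf j] at this
    simp at this
  unfold gibbsT
  by_cases h : ∃ s : Bool, τ = Function.update σ (Sum.inr j) s
  · rw [if_pos h, hsum, div_one]
    obtain ⟨s, rfl⟩ := h
    cases s
    · rw [hupdf, if_pos rfl, piKnn_pos hI]
    · rw [if_neg hne, piKnn_zero hupdt]
  · rw [if_neg h, if_neg (fun hh => h ⟨false, by rw [hupdf, hh]⟩)]

lemma sweepL (l : List (Fin n)) (hl : l.Nodup) :
    ∀ σ : Fin n ⊕ Fin n → Bool, (∀ j, σ (Sum.inr j) = false) →
    ∀ τ, (l.map fun i => gibbsT (piKnn n) (Sum.inl i)).prod σ τ =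
      if (∀ j, τ (Sum.inr j) = false) ∧ ∀ i, i ∉ l → τ (Sum.inl i) = σ (Sum.inl i)
      then (2:ℝ)⁻¹ ^ l.length else 0 := by
  induction l with
  | nil =>
    intro σ hR τ
    simp only [List.map_nil, List.prod_nil, List.length_nil, pow_zero,
      List.not_mem_nil, not_false_iff, forall_true_left]
    rw [Matrix.one_apply]
    by_cases h : σ = τ
    · subst h
      rw [if_pos rfl, if_pos ⟨hR, fun _ => rfl⟩]
    · rw [if_neg h, if_neg]
      rintro ⟨h1, h2⟩
      exact h (funext fun x => by
        cases x with
        | inl i => exact (h2 i).symm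
        | inr j => rw [hR j, h1 j])
  | cons i l ih =>
    intro σ hR τ
    obtain ⟨hi, hl'⟩ := List.nodup_cons.mp hl
    rw [List.map_cons, List.prod_cons, Matrix.mul_apply]
    have hupdR : ∀ b : Bool, ∀ j, Function.update σ (Sum.inl i) b (Sum.inr j) = false := by
      intro b j
      rw [Function.update_of_ne (by simp)]
      exact hR j
    rw [Finset.sum_congr rfl (fun ρ _ => by
      rw [gibbs_left hR i ρ, add_mul, ite_mul, ite_mul, zero_mul])]
    rw [Finset.sum_add_distrib, Finset.sum_ite_eq' univ, Finset.sum_ite_eq' univ,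
      if_pos (Finset.mem_univ _), if_pos (Finset.mem_univ _),
      ih hl' _ (hupdR true) τ, ih hl' _ (hupdR false) τ]
    by_cases hC : (∀ j, τ (Sum.inr j) = false) ∧ ∀ k, k ∉ i :: l → τ (Sum.inl k) = σ (Sum.inl k)
    · rw [if_pos hC]
      have hcond : ∀ b : Bool,
          ((∀ j, τ (Sum.inr j) = false) ∧
            ∀ k, k ∉ l → τ (Sum.inl k) = Function.update σ (Sum.inl i) b (Sum.inl k)) ↔
          τ (Sum.inl i) = b := by
        intro b
        constructor
        · intro h
          have := h.2 i hi
          rwa [Function.update_self] at this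
        · intro hb
          refine ⟨hC.1, fun k hk => ?_⟩
          by_cases hki : k = i
          · subst hki
            rw [Function.update_self]
            exact hb
          · rw [Function.update_of_ne (by simpa using hki)]
            exact hC.2 k (by simp [hki, hk])
      cases hτi : τ (Sum.inl i)
      · rw [if_neg (fun hh => by simpa [hτi] using (hcond true).mp hh),
          if_pos ((hcond false).mpr hτi), List.length_cons, pow_succ]
        ring
      · rw [if_pos ((hcond true).mpr hτi),
          if_neg (fun hh => by simpa [hτi] using (hcond false).mp hh),
          List.length_cons, pow_succ]
        ring
    · rw [if_neg hC]
      have hnb : ∀ b : Bool,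
          ¬((∀ j, τ (Sum.inr j) = false) ∧
            ∀ k, k ∉ l → τ (Sum.inl k) = Function.update σ (Sum.inl i) b (Sum.inl k)) := by
        intro b hh
        apply hC
        refine ⟨hh.1, fun k hk => ?_⟩
        have hki : k ≠ i := fun e => hk (e ▸ List.mem_cons_self (a := i) (l := l))
        have hkl : k ∉ l := fun e => hk (List.mem_cons_of_mem _ e)
        have := hh.2 k hkl
        rwa [Function.update_of_ne (by simpa using hki)] at this
      rw [if_neg (hnb true), if_neg (hnb false)]
      ring

lemma sweepR (l : List (Fin n)) (hl : l.Nodup) :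
    ∀ σ : Fin n ⊕ Fin n → Bool, (∀ i, σ (Sum.inl i) = false) →
    ∀ τ, (l.map fun j => gibbsT (piKnn n) (Sum.inr j)).prod σ τ =
      if (∀ i, τ (Sum.inl i) = false) ∧ ∀ j, j ∉ l → τ (Sum.inr j) = σ (Sum.inr j)
      then (2:ℝ)⁻¹ ^ l.length else 0 := by
  induction l with
  | nil =>
    intro σ hL τ
    simp only [List.map_nil, List.prod_nil, List.length_nil, pow_zero,
      List.not_mem_nil, not_false_iff, forall_true_left]
    rw [Matrix.one_apply]
    by_cases h : σ = τ
    · subst h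
      rw [if_pos rfl, if_pos ⟨hL, fun _ => rfl⟩]
    · rw [if_neg h, if_neg]
      rintro ⟨h1, h2⟩
      exact h (funext fun x => by
        cases x with
        | inl i => rw [hL i, h1 i]
        | inr j => exact (h2 j).symm)
  | cons j l ih =>
    intro σ hL τ
    obtain ⟨hj, hl'⟩ := List.nodup_cons.mp hl
    rw [List.map_cons, List.prod_cons, Matrix.mul_apply]
    have hupdL : ∀ b : Bool, ∀ i, Function.update σ (Sum.inr j) b (Sum.inl i) = false := by
      intro b i
      rw [Function.update_of_ne (by simp)]
      exact hL i
    rw [Finset.sum_congr rfl (fun ρ _ => by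
      rw [gibbs_right hL j ρ, add_mul, ite_mul, ite_mul, zero_mul])]
    rw [Finset.sum_add_distrib, Finset.sum_ite_eq' univ, Finset.sum_ite_eq' univ,
      if_pos (Finset.mem_univ _), if_pos (Finset.mem_univ _),
      ih hl' _ (hupdL true) τ, ih hl' _ (hupdL false) τ]
    by_cases hC : (∀ i, τ (Sum.inl i) = false) ∧ ∀ k, k ∉ j :: l → τ (Sum.inr k) = σ (Sum.inr k)
    · rw [if_pos hC]
      have hcond : ∀ b : Bool,
          ((∀ i, τ (Sum.inl i) = false) ∧
            ∀ k, k ∉ l → τ (Sum.inr k) = Function.update σ (Sum.inr j) b (Sum.inr k)) ↔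
          τ (Sum.inr j) = b := by
        intro b
        constructor
        · intro h
          have := h.2 j hj
          rwa [Function.update_self] at this
        · intro hb
          refine ⟨hC.1, fun k hk => ?_⟩
          by_cases hkj : k = j
          · subst hkj
            rw [Function.update_self]
            exact hb
          · rw [Function.update_of_ne (by simpa using hkj)]
            exact hC.2 k (by simp [hkj, hk])
      cases hτj : τ (Sum.inr j)
      · rw [if_neg (fun hh => by simpa [hτj] using (hcond true).mp hh),
          if_pos ((hcond false).mpr hτj), List.length_cons, pow_succ]
        ring
      · rw [if_pos ((hcond true).mpr hτj),
          if_neg (fun hh => by simpa [hτj] using (hcond false).mp hh),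
          List.length_cons, pow_succ]
        ring
    · rw [if_neg hC]
      have hnb : ∀ b : Bool,
          ¬((∀ i, τ (Sum.inl i) = false) ∧
            ∀ k, k ∉ l → τ (Sum.inr k) = Function.update σ (Sum.inr j) b (Sum.inr k)) := by
        intro b hh
        apply hC
        refine ⟨hh.1, fun k hk => ?_⟩
        have hkj : k ≠ j := fun e => hk (e ▸ List.mem_cons_self (a := j) (l := l))
        have hkl : k ∉ l := fun e => hk (List.mem_cons_of_mem _ e)
        have := hh.2 k hkl
        rwa [Function.update_of_ne (by simpa using hkj)] at this
      rw [if_neg (hnb true), if_neg (hnb false)]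
      ring

lemma sweepR_forced (l : List (Fin n)) :
    ∀ σ : Fin n ⊕ Fin n → Bool, IndepKnn σ → (∃ i, σ (Sum.inl i) = true) →
    ∀ τ, (l.map fun j => gibbsT (piKnn n) (Sum.inr j)).prod σ τ =
      if τ = σ then 1 else 0 := by
  induction l with
  | nil =>
    intro σ _ _ τ
    rw [List.map_nil, List.prod_nil, Matrix.one_apply]
    by_cases h : σ = τ
    · rw [if_pos h, if_pos h.symm]
    · rw [if_neg h, if_neg (fun hh => h hh.symm)]
  | cons j l ih =>
    intro σ hI hL τ
    obtain ⟨i0, hi0⟩ := hL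
    rw [List.map_cons, List.prod_cons, Matrix.mul_apply]
    rw [Finset.sum_congr rfl (fun ρ _ => by
      rw [gibbs_right_forced hI hi0 j ρ, ite_mul, zero_mul, one_mul])]
    rw [Finset.sum_ite_eq' univ, if_pos (Finset.mem_univ _)]
    exact ih σ hI ⟨i0, hi0⟩ τ

def eL : {σ : Fin n ⊕ Fin n → Bool // ∀ i, σ (Sum.inl i) = false} ≃ (Fin n → Bool) where
  toFun σ := fun j => σ.1 (Sum.inr j)
  invFun g := ⟨Sum.elim (fun _ => false) g, fun _ => rfl⟩
  left_inv σ := Subtype.ext (funext fun x => by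
    cases x with
    | inl i => exact (σ.2 i).symm
    | inr j => rfl)
  right_inv g := rfl

def eR : {σ : Fin n ⊕ Fin n → Bool // ∀ j, σ (Sum.inr j) = false} ≃ (Fin n → Bool) where
  toFun σ := fun i => σ.1 (Sum.inl i)
  invFun g := ⟨Sum.elim g (fun _ => false), fun _ => rfl⟩
  left_inv σ := Subtype.ext (funext fun x => by
    cases x with
    | inl i => rfl
    | inr j => exact (σ.2 j).symm)
  right_inv g := rfl

lemma card_fun_bool : Fintype.card (Fin n → Bool) = 2 ^ n := by
  simp

lemma card_left_false :
    (univ.filter fun σ : Fin n ⊕ Fin n → Bool => ∀ i, σ (Sum.inl i) = false).card = 2 ^ n := by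
  rw [← Fintype.card_subtype]
  rw [Fintype.card_congr eL]
  exact card_fun_bool

lemma card_right_false :
    (univ.filter fun σ : Fin n ⊕ Fin n → Bool => ∀ j, σ (Sum.inr j) = false).card = 2 ^ n := by
  rw [← Fintype.card_subtype]
  rw [Fintype.card_congr eR]
  exact card_fun_bool

lemma filter_both :
    (univ.filter fun σ : Fin n ⊕ Fin n → Bool =>
      (∀ i, σ (Sum.inl i) = false) ∧ ∀ j, σ (Sum.inr j) = false) = {fun _ => false} := by
  ext σ
  simp only [mem_filter, mem_univ, true_and, mem_singleton]
  constructor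
  · rintro ⟨h1, h2⟩
    funext x
    cases x with
    | inl i => exact h1 i
    | inr j => exact h2 j
  · rintro rfl
    exact ⟨fun _ => rfl, fun _ => rfl⟩

def eS : {τ : Fin n ⊕ Fin n → Bool //
      (∀ i, τ (Sum.inl i) = false) ∧ ∃ j, τ (Sum.inr j) = true} ≃
    {g : Fin n → Bool // ∃ j, g j = true} where
  toFun τ := ⟨fun j => τ.1 (Sum.inr j), τ.2.2⟩
  invFun g := ⟨Sum.elim (fun _ => false) g.1, ⟨fun _ => rfl, g.2⟩⟩
  left_inv τ := Subtype.ext (funext fun x => by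
    cases x with
    | inl i => exact (τ.2.1 i).symm
    | inr j => rfl)
  right_inv g := rfl

lemma card_exists_true : Fintype.card {g : Fin n → Bool // ∃ j, g j = true} = 2 ^ n - 1 := by
  have h1 : Fintype.card {g : Fin n → Bool // ¬∃ j, g j = true} = 1 := by
    rw [Fintype.card_eq_one_iff]
    refine ⟨⟨fun _ => false, by simp⟩, ?_⟩
    rintro ⟨g, hg⟩
    apply Subtype.ext
    funext j
    push_neg at hg
    simpa using hg j
  have h2 := Fintype.card_subtype_compl (p := fun g : Fin n → Bool => ∃ j, g j = true)
  have h3 : Fintype.card {g : Fin n → Bool // ∃ j, g j = true} ≤ Fintype.card (Fin n → Bool) :=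
    Fintype.card_subtype_le _
  rw [card_fun_bool, h1] at h2
  rw [card_fun_bool] at h3
  clear h1
  generalize Fintype.card {g : Fin n → Bool // ∃ j, g j = true} = c at h2 h3 ⊢
  omega

lemma card_S :
    (univ.filter fun τ : Fin n ⊕ Fin n → Bool =>
      (∀ i, τ (Sum.inl i) = false) ∧ ∃ j, τ (Sum.inr j) = true).card = 2 ^ n - 1 := by
  rw [← Fintype.card_subtype, Fintype.card_congr eS, card_exists_true]

end Aux

/-- the number of independent sets of K_{n,n} is 2^{n+1} - 1, and
for the alternating-scan sampler started at any state with empty right side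
(i.e. in Ω_L), the probability of being in Ω_R (nonempty subsets of the right
side) after one epoch is 2^{-n}(1 - 2^{-n}). -/
theorem knn_card_and_escape_probability (n : ℕ) :
    Fintype.card {σ : Fin n ⊕ Fin n → Bool // IndepKnn σ} = 2 ^ (n + 1) - 1 ∧
    ∀ σ : Fin n ⊕ Fin n → Bool, IndepKnn σ → (∀ j, σ (Sum.inr j) = false) →
      ∑ τ ∈ univ.filter (fun τ : Fin n ⊕ Fin n → Bool =>
          (∀ i, τ (Sum.inl i) = false) ∧ ∃ j, τ (Sum.inr j) = true),
        PASKnn n σ τ = (2 : ℝ)⁻¹ ^ n * (1 - (2 : ℝ)⁻¹ ^ n) := by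
  constructor
  · rw [Fintype.card_subtype]
    have hfe : (univ.filter fun σ : Fin n ⊕ Fin n → Bool => IndepKnn σ) =
        univ.filter fun σ => (∀ i, σ (Sum.inl i) = false) ∨ ∀ j, σ (Sum.inr j) = false := by
      apply Finset.filter_congr
      intro σ _
      exact indep_iff σ
    rw [hfe, Finset.filter_or]
    have hU := Finset.card_union_add_card_inter
      (univ.filter fun σ : Fin n ⊕ Fin n → Bool => ∀ i, σ (Sum.inl i) = false)
      (univ.filter fun σ : Fin n ⊕ Fin n → Bool => ∀ j, σ (Sum.inr j) = false)
    rw [← Finset.filter_and, filter_both, Finset.card_singleton,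
      card_left_false, card_right_false] at hU
    have hp : 2 ^ (n + 1) = 2 ^ n + 2 ^ n := by rw [pow_succ]; ring
    generalize ((univ.filter fun σ : Fin n ⊕ Fin n → Bool => ∀ i, σ (Sum.inl i) = false) ∪
      (univ.filter fun σ : Fin n ⊕ Fin n → Bool => ∀ j, σ (Sum.inr j) = false)).card = m at hU ⊢
    omega
  · intro σ hσ hR
    unfold PASKnn
    rw [List.ofFn_eq_map, List.ofFn_eq_map]
    set S := univ.filter (fun τ : Fin n ⊕ Fin n → Bool =>
      (∀ i, τ (Sum.inl i) = false) ∧ ∃ j, τ (Sum.inr j) = true) with hS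
    set PL := ((List.finRange n).map fun i => gibbsT (piKnn n) (Sum.inl i)).prod with hPLdef
    set PR := ((List.finRange n).map fun j => gibbsT (piKnn n) (Sum.inr j)).prod with hPRdef
    have hPL : ∀ ρ, PL σ ρ = if ∀ j, ρ (Sum.inr j) = false then (2:ℝ)⁻¹ ^ n else 0 := by
      intro ρ
      rw [hPLdef, sweepL (List.finRange n) (List.nodup_finRange n) σ hR ρ]
      simp [List.mem_finRange, List.length_finRange]
    have key : ∀ ρ : Fin n ⊕ Fin n → Bool,
        PL σ ρ * (∑ τ ∈ S, PR ρ τ) =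
          if ρ = (fun _ => false) then (2:ℝ)⁻¹ ^ n * (1 - (2:ℝ)⁻¹ ^ n) else 0 := by
      intro ρ
      by_cases hρR : ∀ j, ρ (Sum.inr j) = false
      · rw [hPL, if_pos hρR]
        by_cases hρL : ∀ i, ρ (Sum.inl i) = false
        · have hρ0 : ρ = (fun _ => false) := funext fun x => by
            cases x with
            | inl i => exact hρL i
            | inr j => exact hρR j
          rw [if_pos hρ0]
          congr 1
          have hPRρ : ∀ τ, PR ρ τ = if ∀ i, τ (Sum.inl i) = false then (2:ℝ)⁻¹ ^ n else 0 := by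
            intro τ
            rw [hPRdef, sweepR (List.finRange n) (List.nodup_finRange n) ρ hρL τ]
            simp [List.mem_finRange, List.length_finRange]
          rw [Finset.sum_congr rfl (fun τ hτ => by
            rw [hPRρ τ, if_pos (Finset.mem_filter.mp hτ).2.1])]
          rw [Finset.sum_const, hS, card_S, nsmul_eq_mul]
          have h2 : (1:ℕ) ≤ 2 ^ n := Nat.one_le_two_pow
          have hc : ((2 ^ n - 1 : ℕ) : ℝ) = 2 ^ n - 1 := by
            push_cast [h2]
            ring
          have hm : (2:ℝ) ^ n * (2:ℝ)⁻¹ ^ n = 1 := by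
            rw [← mul_pow]
            norm_num
          rw [hc, sub_mul, hm, one_mul]
        · push_neg at hρL
          obtain ⟨i0, hi0⟩ := hρL
          have hi0' : ρ (Sum.inl i0) = true := Bool.ne_false_iff.mp hi0
          rw [if_neg (fun hh => by rw [hh] at hi0'; simp at hi0')]
          have hPRρ : ∀ τ, PR ρ τ = if τ = ρ then 1 else 0 := fun τ => by
            rw [hPRdef]
            exact sweepR_forced (List.finRange n) ρ (indep_of_right_false hρR) ⟨i0, hi0'⟩ τ
          rw [Finset.sum_congr rfl (fun τ _ => hPRρ τ), Finset.sum_ite_eq' S ρ]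
          rw [if_neg (fun hmem => by
            have := (Finset.mem_filter.mp hmem).2.1 i0
            rw [hi0'] at this
            simp at this)]
          ring
      · rw [hPL, if_neg hρR, zero_mul, if_neg]
        intro hh
        apply hρR
        intro j
        rw [hh]
    calc ∑ τ ∈ S, (PL * PR) σ τ
        = ∑ τ ∈ S, ∑ ρ, PL σ ρ * PR ρ τ := by
          refine Finset.sum_congr rfl fun τ _ => ?_
          rw [Matrix.mul_apply]
      _ = ∑ ρ, PL σ ρ * ∑ τ ∈ S, PR ρ τ := by
          rw [Finset.sum_comm]
          exact Finset.sum_congr rfl fun ρ _ => (Finset.mul_sum _ _ _).symm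
      _ = (2:ℝ)⁻¹ ^ n * (1 - (2:ℝ)⁻¹ ^ n) := by
          rw [Finset.sum_congr rfl fun ρ _ => key ρ, Finset.sum_ite_eq' univ,
            if_pos (Finset.mem_univ _)]
end
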